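/- arXiv:2412.14198 — 5 statements merged into one kernel-verified Lean document; each statement's English description precedes it below -/
import Mathlib

section
/- Let G be a finite simple graph with positive real vertex weights ω, and let u, v be non-adjacent vertices of G such that N(u) ⊆ N(v) and ω(u) + ω(v) < ω(N(v)). Let G' be obtained from G by adding the edge {u,v}, with weights ω' equal to ω except ω'(v) = ω(v) + ω(u). If I' is a maximum ω'-weight independent set of G', then: if v ∈ I' then I' ∪ {u} is a maximum ω-weight independent set of G, and if v ∉ I' then I' is a maximum ω-weight independent set of G. -/
open scoped Classical

/-- `S` is an independent set of vertices in `G`: no two members are adjacent. -/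
def IsIndepSet {V : Type*} (G : SimpleGraph V) (S : Finset V) : Prop :=
  ∀ a ∈ S, ∀ b ∈ S, ¬ G.Adj a b

/-- The maximum total `w`-weight of an independent set of `G` contained in `A`
(the weighted independence number of the subgraph of `G` induced on `A`). -/
noncomputable def alphaOn {V : Type*} [Fintype V] (G : SimpleGraph V) (w : V → ℝ)
    (A : Set V) : ℝ :=
  sSup {x : ℝ | ∃ S : Finset V, ↑S ⊆ A ∧ IsIndepSet G S ∧ x = ∑ v ∈ S, w v}

/-- The maximum total `w`-weight of an independent set of `G`. -/
noncomputable def alpha {V : Type*} [Fintype V] (G : SimpleGraph V) (w : V → ℝ) : ℝ :=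
  alphaOn G w Set.univ

/-- `S` is a maximum `w`-weight independent set of `G`. -/
def IsMWIS {V : Type*} [Fintype V] (G : SimpleGraph V) (w : V → ℝ) (S : Finset V) : Prop :=
  IsIndepSet G S ∧ ∑ v ∈ S, w v = alpha G w

/-- The closed neighborhood `N[v]` of a vertex. -/
def closedNbhd {V : Type*} (G : SimpleGraph V) (v : V) : Set V :=
  insert v (G.neighborSet v)

/-- The open neighborhood `N(S)` of a set of vertices. -/
def setNbhd {V : Type*} (G : SimpleGraph V) (S : Set V) : Set V :=
  (⋃ s ∈ S, G.neighborSet s) \ S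

/-- The closed neighborhood `N[S]` of a set of vertices. -/
def closedSetNbhd {V : Type*} (G : SimpleGraph V) (S : Set V) : Set V :=
  setNbhd G S ∪ S


section Helpers
variable {V : Type*} [Fintype V]

lemma alpha_set_finite (G : SimpleGraph V) (w : V → ℝ) :
    {x : ℝ | ∃ S : Finset V, ↑S ⊆ (Set.univ : Set V) ∧ IsIndepSet G S ∧ x = ∑ v ∈ S, w v}.Finite :=
  Set.Finite.subset (Set.finite_range fun S : Finset V => ∑ v ∈ S, w v)
    (by rintro x ⟨S, -, -, rfl⟩; exact ⟨S, rfl⟩)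

lemma le_alpha (G : SimpleGraph V) (w : V → ℝ) {S : Finset V} (hS : IsIndepSet G S) :
    ∑ v ∈ S, w v ≤ alpha G w := by
  show _ ≤ sSup _
  exact le_csSup (alpha_set_finite G w).bddAbove ⟨S, by simp, hS, rfl⟩

lemma alpha_attained (G : SimpleGraph V) (w : V → ℝ) :
    ∃ S : Finset V, IsIndepSet G S ∧ alpha G w = ∑ v ∈ S, w v := by
  have hne : {x : ℝ | ∃ S : Finset V, ↑S ⊆ (Set.univ : Set V) ∧ IsIndepSet G S ∧ x = ∑ v ∈ S, w v}.Nonempty :=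
    ⟨0, ∅, by simp, fun a ha _ _ => absurd ha (Finset.notMem_empty a), by simp⟩
  obtain ⟨S, -, hS, h⟩ := hne.csSup_mem (alpha_set_finite G w)
  exact ⟨S, hS, h⟩

end Helpers

theorem stmt_4 {V : Type*} [Fintype V] (G : SimpleGraph V) (w : V → ℝ)
    (hw : ∀ x, 0 < w x) (u v : V) (hne : u ≠ v) (hnadj : ¬ G.Adj u v)
    (hsub : G.neighborSet u ⊆ G.neighborSet v)
    (hwt : w u + w v < ∑ x ∈ Finset.univ.filter (fun x => G.Adj v x), w x)
    (I' : Finset V)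
    (hI' : IsMWIS (G ⊔ SimpleGraph.fromEdgeSet {s(u, v)})
      (Function.update w v (w v + w u)) I') :
    (v ∈ I' → IsMWIS G w (insert u I')) ∧ (v ∉ I' → IsMWIS G w I') := by
  classical
  set G' := G ⊔ SimpleGraph.fromEdgeSet {s(u, v)} with hG'
  set w' := Function.update w v (w v + w u) with hw'
  obtain ⟨hI'indep, hI'sum⟩ := hI'
  have hadj' : G'.Adj u v := by
    rw [hG']
    right
    exact ⟨by simp, hne⟩
  have hGle : ∀ a b, G.Adj a b → G'.Adj a b := fun a b h => Or.inl h
  have hsum_mem : ∀ T : Finset V, v ∈ T → ∑ x ∈ T, w' x = ∑ x ∈ T, w x + w u := by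
    intro T hv
    rw [hw', Finset.sum_update_of_mem hv, Finset.sum_eq_sum_sdiff_singleton_add hv w]
    ring
  have hsum_not : ∀ T : Finset V, v ∉ T → ∑ x ∈ T, w' x = ∑ x ∈ T, w x := by
    intro T hv
    refine Finset.sum_congr rfl fun x hx => Function.update_of_ne ?_ _ _
    rintro rfl; exact hv hx
  have hB : alpha G w ≤ ∑ x ∈ I', w' x := by
    obtain ⟨S, hS, hSα⟩ := alpha_attained G w
    rw [hSα, hI'sum]
    by_cases huv : u ∈ S ∧ v ∈ S
    · have hvS' : v ∈ S.erase u := Finset.mem_erase.2 ⟨hne.symm, huv.2⟩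
      have hindep' : IsIndepSet G' (S.erase u) := by
        intro a ha b hb hab
        have ha' := Finset.mem_erase.1 ha
        have hb' := Finset.mem_erase.1 hb
        rcases hab with hab | hab
        · exact hS a ha'.2 b hb'.2 hab
        · rcases Sym2.eq_iff.1 hab.1 with ⟨rfl, rfl⟩ | ⟨rfl, rfl⟩
          · exact ha'.1 rfl
          · exact hb'.1 rfl
      have := le_alpha G' w' hindep'
      have heq : ∑ x ∈ S.erase u, w' x = ∑ x ∈ S, w x := by
        rw [hsum_mem _ hvS', Finset.sum_erase_add S w huv.1]
      linarith
    · have hindep' : IsIndepSet G' S := by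
        intro a ha b hb hab
        rcases hab with hab | hab
        · exact hS a ha b hb hab
        · rcases Sym2.eq_iff.1 hab.1 with ⟨rfl, rfl⟩ | ⟨rfl, rfl⟩
          · exact huv ⟨ha, hb⟩
          · exact huv ⟨hb, ha⟩
      have h1 := le_alpha G' w' hindep'
      by_cases hvS : v ∈ S
      · have := hsum_mem S hvS
        have := (hw u).le
        linarith
      · rw [← hsum_not S hvS]; exact h1
  constructor
  · intro hv
    have hu : u ∉ I' := fun hu => hI'indep u hu v hv hadj'
    have hun : ∀ b ∈ I', ¬ G.Adj u b := by
      intro b hb hab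
      by_cases hbv : b = v
      · exact hnadj (hbv ▸ hab)
      · exact hI'indep v hv b hb (hGle _ _ (hsub hab))
    have hindep : IsIndepSet G (insert u I') := by
      intro a ha b hb hab
      rcases Finset.mem_insert.1 ha with ha | ha <;>
        rcases Finset.mem_insert.1 hb with hb | hb
      · rw [ha, hb] at hab; exact G.irrefl hab
      · rw [ha] at hab; exact hun b hb hab
      · rw [hb] at hab; exact hun a ha hab.symm
      · exact hI'indep a ha b hb (hGle _ _ hab)
    refine ⟨hindep, le_antisymm (le_alpha G w hindep) ?_⟩
    have heq : ∑ x ∈ insert u I', w x = ∑ x ∈ I', w' x := by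
      rw [Finset.sum_insert hu, hsum_mem I' hv]; ring
    rw [heq]; exact hB
  · intro hv
    have hindep : IsIndepSet G I' := fun a ha b hb hab => hI'indep a ha b hb (hGle _ _ hab)
    refine ⟨hindep, le_antisymm (le_alpha G w hindep) ?_⟩
    rw [← hsum_not I' hv]; exact hB
end

section
/- Let G be a finite simple graph with positive real vertex weights ω, and let u, v be non-adjacent vertices with N(u) = N(v). If ω(u) + ω(v) ≥ α_ω(G[N(v)]), then some maximum ω-weight independent set of G contains both u and v, and α_ω(G) = α_ω(G − N[{u,v}]) + ω(u) + ω(v). -/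
open scoped Classical

section helpers

variable {V : Type*} [Fintype V] (G : SimpleGraph V) (w : V → ℝ)

lemma alphaSet_finite (A : Set V) :
    {x : ℝ | ∃ S : Finset V, ↑S ⊆ A ∧ IsIndepSet G S ∧ x = ∑ v ∈ S, w v}.Finite := by
  apply Set.Finite.subset (Set.finite_range (fun S : Finset V => ∑ v ∈ S, w v))
  rintro x ⟨S, -, -, rfl⟩
  exact ⟨S, rfl⟩

lemma alphaSet_nonempty (A : Set V) :
    {x : ℝ | ∃ S : Finset V, ↑S ⊆ A ∧ IsIndepSet G S ∧ x = ∑ v ∈ S, w v}.Nonempty :=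
  ⟨0, ∅, by simp, by intro a ha; simp at ha, by simp⟩

lemma le_alphaOn {A : Set V} {S : Finset V} (hS : ↑S ⊆ A) (hi : IsIndepSet G S) :
    ∑ v ∈ S, w v ≤ alphaOn G w A :=
  le_csSup (alphaSet_finite G w A).bddAbove ⟨S, hS, hi, rfl⟩

lemma alphaOn_attained (A : Set V) :
    ∃ S : Finset V, ↑S ⊆ A ∧ IsIndepSet G S ∧ alphaOn G w A = ∑ v ∈ S, w v :=
  (alphaSet_nonempty G w A).csSup_mem (alphaSet_finite G w A)

lemma indep_subset {S T : Finset V} (h : S ⊆ T) (hT : IsIndepSet G T) : IsIndepSet G S :=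
  fun a ha b hb => hT a (h ha) b (h hb)

end helpers

theorem stmt_6 {V : Type*} [Fintype V] (G : SimpleGraph V) (w : V → ℝ)
    (hw : ∀ x, 0 < w x) (u v : V) (hne : u ≠ v) (hnadj : ¬ G.Adj u v)
    (hN : G.neighborSet u = G.neighborSet v)
    (hwt : alphaOn G w (G.neighborSet v) ≤ w u + w v) :
    (∃ S : Finset V, IsMWIS G w S ∧ u ∈ S ∧ v ∈ S) ∧
      alpha G w = alphaOn G w (closedSetNbhd G {u, v})ᶜ + w u + w v := by
  have hAdj : ∀ a, G.Adj u a ↔ G.Adj v a := by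
    intro a
    rw [← SimpleGraph.mem_neighborSet, ← SimpleGraph.mem_neighborSet, hN]
  have hCmem : ∀ x, x ∈ closedSetNbhd G {u, v} ↔ G.Adj v x ∨ x = u ∨ x = v := by
    intro x
    simp only [closedSetNbhd, setNbhd, Set.mem_union, Set.mem_diff, Set.mem_iUnion,
      Set.mem_insert_iff, Set.mem_singleton_iff, SimpleGraph.mem_neighborSet]
    constructor
    · rintro (⟨⟨s, hs⟩, -⟩ | h)
      · rcases hs with ⟨(rfl | rfl), hadj⟩
        · exact Or.inl ((hAdj x).mp hadj)
        · exact Or.inl hadj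
      · exact Or.inr h
    · rintro (h | h)
      · by_cases hx : x = u ∨ x = v
        · exact Or.inr hx
        · exact Or.inl ⟨⟨v, Or.inr rfl, h⟩, hx⟩
      · exact Or.inr h
  -- key construction lemma
  have key : ∀ R : Finset V, (∀ x ∈ R, ¬ G.Adj v x ∧ x ≠ u ∧ x ≠ v) → IsIndepSet G R →
      IsIndepSet G (insert u (insert v R)) ∧
      ∑ x ∈ insert u (insert v R), w x = w u + w v + ∑ x ∈ R, w x := by
    intro R hR hRind
    have huR : u ∉ insert v R := by
      simp only [Finset.mem_insert]
      rintro (h | h)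
      · exact hne h
      · exact (hR u h).2.1 rfl
    have hvR : v ∉ R := fun h => (hR v h).2.2 rfl
    constructor
    · intro a ha b hb
      simp only [Finset.mem_insert] at ha hb
      have adjcase : ∀ x ∈ R, ¬ G.Adj x u ∧ ¬ G.Adj x v := by
        intro x hx
        refine ⟨fun h => (hR x hx).1 ((hAdj x).mp h.symm), fun h => (hR x hx).1 h.symm⟩
      rcases ha with rfl | rfl | ha <;> rcases hb with rfl | rfl | hb
      · exact fun h => G.irrefl h
      · exact hnadj
      · exact fun h => (adjcase b hb).1 h.symm
      · exact fun h => hnadj h.symm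
      · exact fun h => G.irrefl h
      · exact fun h => (adjcase b hb).2 h.symm
      · exact (adjcase a ha).1
      · exact (adjcase a ha).2
      · exact hRind a ha b hb
    · rw [Finset.sum_insert huR, Finset.sum_insert hvR, add_assoc]
  -- obtain S0 a MWIS of G
  obtain ⟨S0, -, hS0ind, hS0sum⟩ := alphaOn_attained G w Set.univ
  set C := closedSetNbhd G ({u, v} : Set V) with hCdef
  set S1 := S0.filter (fun x => x ∉ C) with hS1def
  have hS1prop : ∀ x ∈ S1, ¬ G.Adj v x ∧ x ≠ u ∧ x ≠ v := by
    intro x hx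
    rw [hS1def, Finset.mem_filter] at hx
    have := hx.2
    rw [hCmem x] at this
    push_neg at this
    exact this
  have hS1ind : IsIndepSet G S1 := indep_subset G (Finset.filter_subset _ _) hS0ind
  obtain ⟨hTind, hTsum⟩ := key S1 hS1prop hS1ind
  set T := insert u (insert v S1) with hTdef
  -- bound on the part of S0 inside C
  have hinC : ∑ x ∈ S0.filter (fun x => x ∈ C), w x ≤ w u + w v := by
    by_cases hadj : ∃ x ∈ S0, G.Adj v x
    · obtain ⟨x0, hx0S, hx0adj⟩ := hadj
      have huS0 : u ∉ S0 := fun h => hS0ind u h x0 hx0S ((hAdj x0).mpr hx0adj)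
      have hvS0 : v ∉ S0 := fun h => hS0ind v h x0 hx0S hx0adj
      have hsub : ↑(S0.filter (fun x => x ∈ C)) ⊆ G.neighborSet v := by
        intro x hx
        simp only [Finset.coe_filter, Set.mem_setOf_eq] at hx
        rcases (hCmem x).mp hx.2 with h | rfl | rfl
        · exact h
        · exact absurd hx.1 huS0
        · exact absurd hx.1 hvS0
      calc ∑ x ∈ S0.filter (fun x => x ∈ C), w x ≤ alphaOn G w (G.neighborSet v) :=
            le_alphaOn G w hsub (indep_subset G (Finset.filter_subset _ _) hS0ind)
        _ ≤ w u + w v := hwt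
    · push_neg at hadj
      have hsub : S0.filter (fun x => x ∈ C) ⊆ {u, v} := by
        intro x hx
        rw [Finset.mem_filter] at hx
        rcases (hCmem x).mp hx.2 with h | rfl | rfl
        · exact absurd h (hadj x hx.1)
        · exact Finset.mem_insert_self _ _
        · exact Finset.mem_insert_of_mem (Finset.mem_singleton_self _)
      calc ∑ x ∈ S0.filter (fun x => x ∈ C), w x ≤ ∑ x ∈ ({u, v} : Finset V), w x :=
            Finset.sum_le_sum_of_subset_of_nonneg hsub (fun i _ _ => (hw i).le)
        _ = w u + w v := Finset.sum_pair hne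
  -- T has weight at least that of S0
  have hTge : ∑ x ∈ S0, w x ≤ ∑ x ∈ T, w x := by
    rw [hTsum]
    have := Finset.sum_filter_add_sum_filter_not S0 (fun x => x ∈ C) w
    linarith
  have hTle : ∑ x ∈ T, w x ≤ alpha G w :=
    le_alphaOn G w (by simp) hTind
  have hTeq : ∑ x ∈ T, w x = alpha G w := by
    rw [alpha] at *
    linarith [hTge, hTle, hS0sum.ge]
  have hS1sub : ↑S1 ⊆ Cᶜ := by
    intro x hx
    rw [hS1def] at hx
    simp only [Finset.coe_filter, Set.mem_setOf_eq] at hx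
    exact hx.2
  constructor
  · exact ⟨T, ⟨hTind, hTeq⟩, Finset.mem_insert_self _ _,
      Finset.mem_insert_of_mem (Finset.mem_insert_self _ _)⟩
  · apply le_antisymm
    · rw [← hTeq, hTsum]
      have h1 : ∑ x ∈ S1, w x ≤ alphaOn G w Cᶜ := le_alphaOn G w hS1sub hS1ind
      linarith
    · obtain ⟨R, hRsub, hRind, hRsum⟩ := alphaOn_attained G w Cᶜ
      have hRprop : ∀ x ∈ R, ¬ G.Adj v x ∧ x ≠ u ∧ x ≠ v := by
        intro x hx
        have := hRsub hx
        rw [Set.mem_compl_iff, hCmem x] at this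
        push_neg at this
        exact this
      obtain ⟨hT'ind, hT'sum⟩ := key R hRprop hRind
      have := le_alphaOn G w (A := Set.univ) (S := insert u (insert v R)) (by simp) hT'ind
      rw [hT'sum] at this
      rw [hRsum, alpha]
      linarith
end

section
/- Let G be a finite simple graph with positive real vertex weights ω, and let u, v, w be pairwise non-adjacent vertices such that {u, v, w} is a heavy set, i.e., for every independent set C of the induced subgraph G[N({u,v,w})] it holds that ω(N(C) ∩ {u,v,w}) ≥ ω(C). Then some maximum ω-weight independent set of G contains u, v, and w, and α_ω(G) = α_ω(G − N[{u,v,w}]) + ω(u) + ω(v) + ω(w). -/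
open scoped Classical

lemma alphaOn_spec {V : Type*} [Fintype V] (G : SimpleGraph V) (w : V → ℝ) (A : Set V) :
    (∃ S : Finset V, ↑S ⊆ A ∧ IsIndepSet G S ∧ alphaOn G w A = ∑ v ∈ S, w v) ∧
    (∀ S : Finset V, ↑S ⊆ A → IsIndepSet G S → ∑ v ∈ S, w v ≤ alphaOn G w A) := by
  set X := {x : ℝ | ∃ S : Finset V, ↑S ⊆ A ∧ IsIndepSet G S ∧ x = ∑ v ∈ S, w v} with hX
  have hfin : X.Finite := by
    apply Set.Finite.subset (Set.finite_range (fun S : Finset V => ∑ v ∈ S, w v))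
    rintro x ⟨S, _, _, rfl⟩; exact ⟨S, rfl⟩
  have hne : X.Nonempty := ⟨0, ∅, by simp, fun a ha => absurd ha (by simp), by simp⟩
  constructor
  · have h : sSup X ∈ X := hne.csSup_mem hfin
    obtain ⟨S, h1, h2, h3⟩ := h
    exact ⟨S, h1, h2, h3⟩
  · intro S h1 h2
    exact le_csSup hfin.bddAbove ⟨S, h1, h2, rfl⟩

lemma mem_closedSetNbhd {V : Type*} (G : SimpleGraph V) (S : Set V) (x : V) :
    x ∈ closedSetNbhd G S ↔ x ∈ S ∨ ∃ s ∈ S, G.Adj s x := by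
  simp only [closedSetNbhd, setNbhd, Set.mem_union, Set.mem_diff, Set.mem_iUnion,
    SimpleGraph.mem_neighborSet]
  constructor
  · rintro (⟨⟨s, hs, hadj⟩, _⟩ | h)
    · exact Or.inr ⟨s, hs, hadj⟩
    · exact Or.inl h
  · rintro (h | ⟨s, hs, hadj⟩)
    · exact Or.inr h
    · by_cases hx : x ∈ S
      · exact Or.inr hx
      · exact Or.inl ⟨⟨s, hs, hadj⟩, hx⟩

lemma mem_setNbhd {V : Type*} (G : SimpleGraph V) (S : Set V) (x : V) :
    x ∈ setNbhd G S ↔ (∃ s ∈ S, G.Adj s x) ∧ x ∉ S := by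
  simp only [setNbhd, Set.mem_diff, Set.mem_iUnion, SimpleGraph.mem_neighborSet]
  tauto

theorem stmt_13 {V : Type*} [Fintype V] (G : SimpleGraph V) (w : V → ℝ)
    (hw : ∀ x, 0 < w x) (a b c : V)
    (hab : a ≠ b) (hac : a ≠ c) (hbc : b ≠ c)
    (hnab : ¬ G.Adj a b) (hnac : ¬ G.Adj a c) (hnbc : ¬ G.Adj b c)
    (hheavy : ∀ C : Finset V, ↑C ⊆ setNbhd G ({a, b, c} : Set V) → IsIndepSet G C →
      ∑ x ∈ C, w x ≤
        ∑ x ∈ ({a, b, c} : Finset V).filter (fun s => s ∈ setNbhd G (↑C : Set V)), w x) :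
    (∃ S : Finset V, IsMWIS G w S ∧ a ∈ S ∧ b ∈ S ∧ c ∈ S) ∧
      alpha G w = alphaOn G w (closedSetNbhd G {a, b, c})ᶜ + w a + w b + w c := by
  classical
  set Tset : Set V := {a, b, c} with hTset
  set Tfin : Finset V := {a, b, c} with hTfin
  have hTcoe : (↑Tfin : Set V) = Tset := by rw [hTfin, hTset]; simp
  have hTsum : ∑ x ∈ Tfin, w x = w a + w b + w c := by
    rw [hTfin, Finset.sum_insert (by simp [hab, hac]),
      Finset.sum_insert (by simp [hbc]), Finset.sum_singleton]; ring
  have hTmemfin : ∀ x ∈ Tfin, x ∈ Tset := by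
    intro x hx; rw [← hTcoe]; exact_mod_cast hx
  -- extension lemma: any independent set avoiding N[T] can be extended by T
  have hext : ∀ X : Finset V, ↑X ⊆ (closedSetNbhd G Tset)ᶜ → IsIndepSet G X →
      IsIndepSet G (X ∪ Tfin) ∧
      ∑ v ∈ X ∪ Tfin, w v = (∑ v ∈ X, w v) + (w a + w b + w c) := by
    intro X hXsub hXind
    have hXnot : ∀ x ∈ X, x ∉ closedSetNbhd G Tset := by
      intro x hx; exact hXsub (Finset.mem_coe.mpr hx)
    have hnadjX : ∀ x ∈ X, ∀ t ∈ Tfin, ¬ G.Adj x t := by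
      intro x hx t ht hadj
      exact hXnot x hx ((mem_closedSetNbhd G Tset x).mpr
        (Or.inr ⟨t, hTmemfin t ht, hadj.symm⟩))
    have hdisj : Disjoint X Tfin := by
      rw [Finset.disjoint_left]
      intro x hx hxT
      exact hXnot x hx ((mem_closedSetNbhd G Tset x).mpr (Or.inl (hTmemfin x hxT)))
    constructor
    · intro x hx y hy hadj
      rcases Finset.mem_union.mp hx with hx' | hx' <;>
        rcases Finset.mem_union.mp hy with hy' | hy'
      · exact hXind x hx' y hy' hadj
      · exact hnadjX x hx' y hy' hadj
      · exact hnadjX y hy' x hx' hadj.symm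
      · rw [hTfin] at hx' hy'
        simp only [Finset.mem_insert, Finset.mem_singleton] at hx' hy'
        rcases hx' with rfl | rfl | rfl <;> rcases hy' with rfl | rfl | rfl <;>
          first
            | exact G.irrefl hadj
            | exact hnab hadj
            | exact hnac hadj
            | exact hnbc hadj
            | exact hnab hadj.symm
            | exact hnac hadj.symm
            | exact hnbc hadj.symm
    · rw [Finset.sum_union hdisj, hTsum]
  -- take a MWIS S₀
  obtain ⟨⟨S₀, _, hS₀ind, hS₀sum⟩, hub⟩ := alphaOn_spec G w (Set.univ : Set V)
  have halpha : alpha G w = ∑ v ∈ S₀, w v := hS₀sum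
  set P := S₀.filter (fun x => x ∉ closedSetNbhd G Tset) with hP
  set Q := S₀.filter (fun x => x ∈ closedSetNbhd G Tset) with hQ
  have hPQ : ∑ v ∈ Q, w v + ∑ v ∈ P, w v = ∑ v ∈ S₀, w v :=
    Finset.sum_filter_add_sum_filter_not S₀ _ w
  have hPsub : ↑P ⊆ (closedSetNbhd G Tset)ᶜ := by
    intro x hx
    simp only [hP, Finset.coe_filter, Set.mem_setOf_eq] at hx
    exact hx.2
  have hPind : IsIndepSet G P := fun x hx y hy =>
    hS₀ind x (Finset.mem_of_mem_filter x hx) y (Finset.mem_of_mem_filter y hy)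
  -- split Q into the neighborhood part C and the part inside T
  set C := S₀.filter (fun x => x ∈ setNbhd G Tset) with hC
  set R := S₀.filter (fun x => x ∈ Tset) with hR
  have hdisjCR : Disjoint C R := by
    rw [Finset.disjoint_left]
    intro x hx hxR
    simp only [hC, hR, Finset.mem_filter, mem_setNbhd] at hx hxR
    exact hx.2.2 hxR.2
  have hQsplit : ∑ v ∈ Q, w v = ∑ v ∈ C, w v + ∑ v ∈ R, w v := by
    have hQeq : Q = C ∪ R := by
      ext x
      simp only [hQ, hC, hR, Finset.mem_union, Finset.mem_filter, mem_closedSetNbhd,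
        mem_setNbhd]
      constructor
      · rintro ⟨hxS, hmem | hmem⟩
        · exact Or.inr ⟨hxS, hmem⟩
        · by_cases hxT : x ∈ Tset
          · exact Or.inr ⟨hxS, hxT⟩
          · exact Or.inl ⟨hxS, hmem, hxT⟩
      · rintro (⟨hxS, hmem, _⟩ | ⟨hxS, hmem⟩)
        · exact ⟨hxS, Or.inr hmem⟩
        · exact ⟨hxS, Or.inl hmem⟩
    rw [hQeq, Finset.sum_union hdisjCR]
  -- apply the heavy condition to C
  have hCsub : ↑C ⊆ setNbhd G Tset := by
    intro x hx
    simp only [hC, Finset.coe_filter, Set.mem_setOf_eq] at hx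
    exact hx.2
  have hCind : IsIndepSet G C := fun x hx y hy =>
    hS₀ind x (Finset.mem_of_mem_filter x hx) y (Finset.mem_of_mem_filter y hy)
  have hCle := hheavy C hCsub hCind
  set D := Tfin.filter (fun s => s ∈ setNbhd G (↑C : Set V)) with hD
  have hdisjDR : Disjoint D R := by
    rw [Finset.disjoint_left]
    intro x hxD hxR
    simp only [hD, Finset.mem_filter] at hxD
    obtain ⟨hxT, hxN⟩ := hxD
    rw [mem_setNbhd] at hxN
    obtain ⟨⟨s, hs, hadj⟩, _⟩ := hxN
    have hsC : s ∈ C := by exact_mod_cast hs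
    have hxS₀ : x ∈ S₀ := (Finset.mem_filter.mp hxR).1
    exact hS₀ind s (Finset.mem_of_mem_filter s hsC) x hxS₀ hadj
  have hDRsub : D ∪ R ⊆ Tfin := by
    intro x hx
    rcases Finset.mem_union.mp hx with hx' | hx'
    · exact Finset.mem_of_mem_filter x hx'
    · have := (Finset.mem_filter.mp hx').2
      rw [← hTcoe] at this
      exact_mod_cast this
  have hDRle : ∑ v ∈ D ∪ R, w v ≤ ∑ v ∈ Tfin, w v :=
    Finset.sum_le_sum_of_subset_of_nonneg hDRsub (fun i _ _ => (hw i).le)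
  have hQle : ∑ v ∈ Q, w v ≤ ∑ v ∈ Tfin, w v := by
    rw [hQsplit]
    have := Finset.sum_union hdisjDR (f := w)
    calc ∑ v ∈ C, w v + ∑ v ∈ R, w v
        ≤ ∑ v ∈ D, w v + ∑ v ∈ R, w v := by linarith [hCle]
      _ = ∑ v ∈ D ∪ R, w v := (Finset.sum_union hdisjDR).symm
      _ ≤ ∑ v ∈ Tfin, w v := hDRle
  -- the new MWIS
  obtain ⟨hS₁ind, hS₁sum⟩ := hext P hPsub hPind
  have hS₁le : ∑ v ∈ P ∪ Tfin, w v ≤ alpha G w :=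
    hub (P ∪ Tfin) (by simp) hS₁ind
  have hS₁ge : alpha G w ≤ ∑ v ∈ P ∪ Tfin, w v := by
    rw [halpha, ← hPQ, hS₁sum, ← hTsum]
    linarith [hQle]
  have hS₁eq : ∑ v ∈ P ∪ Tfin, w v = alpha G w := le_antisymm hS₁le hS₁ge
  have hmemT : a ∈ Tfin ∧ b ∈ Tfin ∧ c ∈ Tfin := by
    rw [hTfin]; refine ⟨?_, ?_, ?_⟩ <;> simp
  refine ⟨⟨P ∪ Tfin, ⟨hS₁ind, hS₁eq⟩, Finset.mem_union_right _ hmemT.1,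
    Finset.mem_union_right _ hmemT.2.1, Finset.mem_union_right _ hmemT.2.2⟩, ?_⟩
  -- the alpha equality
  obtain ⟨⟨M, hMsub, hMind, hMsum⟩, hub'⟩ := alphaOn_spec G w (closedSetNbhd G Tset)ᶜ
  obtain ⟨hMext, hMextsum⟩ := hext M hMsub hMind
  have h1 : ∑ v ∈ M ∪ Tfin, w v ≤ alpha G w := hub (M ∪ Tfin) (by simp) hMext
  have h2 : ∑ v ∈ P, w v ≤ alphaOn G w (closedSetNbhd G Tset)ᶜ := hub' P hPsub hPind
  have h3 : alpha G w = ∑ v ∈ P, w v + (w a + w b + w c) := by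
    rw [← hS₁eq, hS₁sum]
  rw [hMsum] at *
  linarith [hMextsum, h1, h2, h3]
end

section
/- Let G be a finite simple graph with positive real vertex weights ω, and let u, v be non-adjacent vertices having at least one common neighbor, such that {u, v} is a heavy set, i.e., for every independent set Ĩ of the induced subgraph G[N({u,v})] it holds that ω(N(Ĩ) ∩ {u,v}) ≥ ω(Ĩ). Then α_ω(G) = α_ω(G − N[{u,v}]) + ω(u) + ω(v). -/
open scoped Classical

/-!
A heavy independent set `I` can be assumed to lie in a maximum-weight independent set: given any
independent set `S`, its part `C` in `N(I)` is independent in `G[N(I)]`, so heaviness trades `C`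
for the vertices of `I` adjacent to `C`, none of which is in `S`. Replacing `S ∩ N[I]` by `I`
therefore never loses weight, and what remains of `S` lies outside `N[I]`.
-/

section

variable {V : Type*}

lemma IsIndepSet.mono {G : SimpleGraph V} {S T : Finset V} (hT : IsIndepSet G T) (hST : S ⊆ T) :
    IsIndepSet G S :=
  fun a ha b hb => hT a (hST ha) b (hST hb)

lemma mem_closedSetNbhd_of_adj {G : SimpleGraph V} {I : Set V} {s x : V} (hs : s ∈ I)
    (hsx : G.Adj s x) : x ∈ closedSetNbhd G I := by
  by_cases hx : x ∈ I
  · exact Or.inr hx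
  · exact Or.inl ⟨Set.mem_biUnion hs hsx, hx⟩

/-- The inequality defining a heavy set; independence of `I` is kept as a separate hypothesis. -/
def IsHeavy (G : SimpleGraph V) (w : V → ℝ) (I : Finset V) : Prop :=
  ∀ C : Finset V, ↑C ⊆ setNbhd G ↑I → IsIndepSet G C →
    ∑ x ∈ C, w x ≤ ∑ x ∈ I.filter (fun s => s ∈ setNbhd G ↑C), w x

lemma sum_eq_sum_filter_compl_closedSetNbhd_add (G : SimpleGraph V) (w : V → ℝ)
    (I S : Finset V) :
    ∑ x ∈ S, w x = ∑ x ∈ S.filter (· ∈ (closedSetNbhd G ↑I)ᶜ), w x +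
      ∑ x ∈ S.filter (· ∈ setNbhd G ↑I), w x + ∑ x ∈ S ∩ I, w x := by
  simp only [← Finset.filter_mem_eq_inter, Finset.sum_filter, ← Finset.sum_add_distrib]
  refine Finset.sum_congr rfl fun x _ => ?_
  by_cases hN : x ∈ setNbhd G I
  · have hI : x ∉ I := hN.2
    simp [closedSetNbhd, hN, hI]
  · by_cases hI : x ∈ I <;> simp [closedSetNbhd, hN, hI]

/-- The vertices of `I` adjacent to a subset `C` of an independent set `S` avoid `S`. -/
lemma sum_filter_mem_setNbhd_add_sum_inter_le {G : SimpleGraph V} {w : V → ℝ} {I S C : Finset V}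
    (hw : ∀ x ∈ I, 0 ≤ w x) (hS : IsIndepSet G S) (hCS : C ⊆ S) :
    ∑ x ∈ I.filter (· ∈ setNbhd G ↑C), w x + ∑ x ∈ S ∩ I, w x ≤ ∑ x ∈ I, w x := by
  have hdisj : Disjoint (I.filter (· ∈ setNbhd G ↑C)) (S ∩ I) := by
    refine Finset.disjoint_left.mpr fun x hx hxS => ?_
    obtain ⟨c, hcC, hcx⟩ := Set.mem_iUnion₂.mp (Finset.mem_filter.mp hx).2.1
    exact hS c (hCS hcC) x (Finset.mem_inter.mp hxS).1 hcx
  rw [← Finset.sum_union hdisj]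
  refine Finset.sum_le_sum_of_subset_of_nonneg ?_ fun x hx _ => hw x hx
  exact Finset.union_subset (Finset.filter_subset _ _) Finset.inter_subset_right

lemma IsIndepSet.union_of_subset_compl_closedSetNbhd {G : SimpleGraph V} {I S : Finset V}
    (hI : IsIndepSet G I) (hS : IsIndepSet G S) (hSI : ↑S ⊆ (closedSetNbhd G ↑I)ᶜ) :
    IsIndepSet G (S ∪ I) := by
  intro a ha b hb hab
  rcases Finset.mem_union.mp ha with ha | ha <;> rcases Finset.mem_union.mp hb with hb | hb
  · exact hS a ha b hb hab
  · exact hSI ha (mem_closedSetNbhd_of_adj (Finset.mem_coe.mpr hb) hab.symm)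
  · exact hSI hb (mem_closedSetNbhd_of_adj (Finset.mem_coe.mpr ha) hab)
  · exact hI a ha b hb hab

variable [Fintype V]

lemma bddAbove_indepSet_weights (G : SimpleGraph V) (w : V → ℝ) (A : Set V) :
    BddAbove {x : ℝ | ∃ S : Finset V, ↑S ⊆ A ∧ IsIndepSet G S ∧ x = ∑ v ∈ S, w v} := by
  refine (Set.finite_range fun S : Finset V => ∑ v ∈ S, w v).subset ?_ |>.bddAbove
  rintro x ⟨S, -, -, rfl⟩
  exact ⟨S, rfl⟩

lemma sum_le_alphaOn {G : SimpleGraph V} (w : V → ℝ) {A : Set V} {S : Finset V} (hSA : ↑S ⊆ A)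
    (hS : IsIndepSet G S) : ∑ v ∈ S, w v ≤ alphaOn G w A :=
  le_csSup (bddAbove_indepSet_weights G w A) ⟨S, hSA, hS, rfl⟩

lemma alphaOn_le {G : SimpleGraph V} {w : V → ℝ} {A : Set V} {b : ℝ}
    (h : ∀ S : Finset V, ↑S ⊆ A → IsIndepSet G S → ∑ v ∈ S, w v ≤ b) : alphaOn G w A ≤ b := by
  refine csSup_le ⟨0, ∅, by simp, fun a ha => absurd ha (Finset.notMem_empty a), by simp⟩ ?_
  rintro x ⟨S, hSA, hS, rfl⟩
  exact h S hSA hS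

lemma alphaOn_compl_closedSetNbhd_add_le_alpha {G : SimpleGraph V} (w : V → ℝ) {I : Finset V}
    (hI : IsIndepSet G I) :
    alphaOn G w (closedSetNbhd G ↑I)ᶜ + ∑ x ∈ I, w x ≤ alpha G w := by
  suffices alphaOn G w (closedSetNbhd G ↑I)ᶜ ≤ alpha G w - ∑ x ∈ I, w x by linarith
  refine alphaOn_le fun S hSI hS => ?_
  have hdisj : Disjoint S I := Finset.disjoint_left.mpr fun x hxS hxI =>
    hSI hxS (Or.inr (Finset.mem_coe.mpr hxI))
  have := sum_le_alphaOn w (Set.subset_univ _) (hI.union_of_subset_compl_closedSetNbhd hS hSI)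
  rw [Finset.sum_union hdisj] at this
  unfold alpha
  linarith

lemma alpha_le_alphaOn_compl_closedSetNbhd_add {G : SimpleGraph V} {w : V → ℝ} {I : Finset V}
    (hw : ∀ x ∈ I, 0 ≤ w x) (hheavy : IsHeavy G w I) :
    alpha G w ≤ alphaOn G w (closedSetNbhd G ↑I)ᶜ + ∑ x ∈ I, w x := by
  refine alphaOn_le fun S _ hS => ?_
  set C := S.filter (· ∈ setNbhd G ↑I)
  have houter : ∑ x ∈ S.filter (· ∈ (closedSetNbhd G ↑I)ᶜ), w x ≤
      alphaOn G w (closedSetNbhd G ↑I)ᶜ :=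
    sum_le_alphaOn w (fun x hx => (Finset.mem_filter.mp hx).2) (hS.mono (Finset.filter_subset _ _))
  have hC : ∑ x ∈ C, w x ≤ ∑ x ∈ I.filter (· ∈ setNbhd G ↑C), w x :=
    hheavy C (fun x hx => (Finset.mem_filter.mp hx).2) (hS.mono (Finset.filter_subset _ _))
  have hinner := sum_filter_mem_setNbhd_add_sum_inter_le hw hS (Finset.filter_subset _ _ : C ⊆ S)
  rw [sum_eq_sum_filter_compl_closedSetNbhd_add G w I S]
  linarith

end

theorem stmt_14_general {V : Type*} [Fintype V] (G : SimpleGraph V) (w : V → ℝ)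
    (hw : ∀ x, 0 < w x) (u v : V) (hne : u ≠ v) (hnadj : ¬ G.Adj u v)
    (hheavy : ∀ C : Finset V, ↑C ⊆ setNbhd G ({u, v} : Set V) → IsIndepSet G C →
      ∑ x ∈ C, w x ≤
        ∑ x ∈ ({u, v} : Finset V).filter (fun s => s ∈ setNbhd G (↑C : Set V)), w x) :
    alpha G w = alphaOn G w (closedSetNbhd G {u, v})ᶜ + w u + w v := by
  have hindep : IsIndepSet G {u, v} := by
    intro a ha b hb hab
    simp only [Finset.mem_insert, Finset.mem_singleton] at ha hb
    rcases ha with rfl | rfl <;> rcases hb with rfl | rfl <;>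
      first | exact G.irrefl hab | exact hnadj hab | exact hnadj hab.symm
  have hIheavy : IsHeavy G w {u, v} := fun C hC => hheavy C (by rwa [Finset.coe_pair] at hC)
  have hupper := alpha_le_alphaOn_compl_closedSetNbhd_add (fun x _ => (hw x).le) hIheavy
  have hlower := alphaOn_compl_closedSetNbhd_add_le_alpha w hindep
  rw [Finset.coe_pair, Finset.sum_pair hne] at hupper hlower
  linarith

theorem stmt_14 {V : Type*} [Fintype V] (G : SimpleGraph V) (w : V → ℝ)
    (hw : ∀ x, 0 < w x) (u v : V) (hne : u ≠ v) (hnadj : ¬ G.Adj u v)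
    (hcommon : ∃ x, G.Adj u x ∧ G.Adj v x)
    (hheavy : ∀ C : Finset V, ↑C ⊆ setNbhd G ({u, v} : Set V) → IsIndepSet G C →
      ∑ x ∈ C, w x ≤
        ∑ x ∈ ({u, v} : Finset V).filter (fun s => s ∈ setNbhd G (↑C : Set V)), w x) :
    alpha G w = alphaOn G w (closedSetNbhd G {u, v})ᶜ + w u + w v :=
  stmt_14_general G w hw u v hne hnadj hheavy
end

section
/- Let G be a finite simple graph with positive real vertex weights ω, and let v be a vertex of G such that there exists x ∈ N(v) with ω(x) ≥ ω(v) + α_ω(G[N(x) \ N[v]]). Then α_ω(G − v) = α_ω(G), i.e., v can be excluded without changing the maximum weight of an independent set. -/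
open scoped Classical

lemma alphaOn_finite {V : Type*} [Fintype V] (G : SimpleGraph V) (w : V → ℝ) (A : Set V) :
    {x : ℝ | ∃ S : Finset V, ↑S ⊆ A ∧ IsIndepSet G S ∧ x = ∑ v ∈ S, w v}.Finite := by
  apply Set.Finite.subset (Set.finite_range (fun S : Finset V => ∑ v ∈ S, w v))
  rintro y ⟨S, _, _, rfl⟩
  exact ⟨S, rfl⟩

lemma alphaOn_mem_le {V : Type*} [Fintype V] (G : SimpleGraph V) (w : V → ℝ) (A : Set V)
    (S : Finset V) (hS : ↑S ⊆ A) (hI : IsIndepSet G S) : ∑ v ∈ S, w v ≤ alphaOn G w A :=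
  le_csSup (alphaOn_finite G w A).bddAbove ⟨S, hS, hI, rfl⟩

lemma alphaOn_exists {V : Type*} [Fintype V] (G : SimpleGraph V) (w : V → ℝ) (A : Set V) :
    ∃ S : Finset V, ↑S ⊆ A ∧ IsIndepSet G S ∧ alphaOn G w A = ∑ v ∈ S, w v := by
  have hne : {x : ℝ | ∃ S : Finset V, ↑S ⊆ A ∧ IsIndepSet G S ∧ x = ∑ v ∈ S, w v}.Nonempty :=
    ⟨0, ∅, by simp [IsIndepSet]⟩
  exact hne.csSup_mem (alphaOn_finite G w A)

theorem stmt_17 {V : Type*} [Fintype V] (G : SimpleGraph V) (w : V → ℝ)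
    (hw : ∀ x, 0 < w x) (v : V) (x : V) (hx : x ∈ G.neighborSet v)
    (hwt : w v + alphaOn G w (G.neighborSet x \ closedNbhd G v) ≤ w x) :
    alphaOn G w ({v}ᶜ : Set V) = alpha G w := by
  have hvx : G.Adj v x := hx
  apply le_antisymm
  · obtain ⟨S, hSsub, hSI, hEq⟩ := alphaOn_exists G w ({v}ᶜ : Set V)
    rw [hEq]
    exact alphaOn_mem_le G w Set.univ S (by simp) hSI
  · obtain ⟨S, hSsub, hSI, hEq⟩ := alphaOn_exists G w Set.univ
    rw [alpha, hEq]
    by_cases hvS : v ∈ S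
    · -- replace v by x
      set T : Finset V := S.filter (fun u => G.Adj x u ∧ u ≠ v) with hT
      have hTsub : ↑T ⊆ G.neighborSet x \ closedNbhd G v := by
        intro u hu
        simp only [hT, Finset.coe_filter, Set.mem_setOf_eq] at hu
        obtain ⟨huS, hadj, hne⟩ := hu
        refine ⟨hadj, ?_⟩
        intro hcn
        rcases hcn with h | h
        · exact hne h
        · exact hSI v hvS u huS h
      have hTI : IsIndepSet G T := fun a ha b hb =>
        hSI a (Finset.mem_of_mem_filter a ha) b (Finset.mem_of_mem_filter b hb)
      have hTle : ∑ u ∈ T, w u ≤ alphaOn G w (G.neighborSet x \ closedNbhd G v) :=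
        alphaOn_mem_le G w _ T hTsub hTI
      have hxS : x ∉ S := fun hxS => hSI v hvS x hxS hvx
      have hvT : v ∉ T := by simp [hT]
      have hvne : v ≠ x := G.ne_of_adj hvx
      set S' : Finset V := insert x ((S \ T).erase v) with hS'
      have hxnot : x ∉ (S \ T).erase v := fun h =>
        hxS (Finset.mem_sdiff.mp (Finset.mem_of_mem_erase h)).1
      have hS'I : IsIndepSet G S' := by
        intro a ha b hb
        simp only [hS', Finset.mem_insert] at ha hb
        rcases ha with rfl | ha <;> rcases hb with rfl | hb
        · exact fun h => G.irrefl h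
        · intro hab
          have hbS : b ∈ S := (Finset.mem_sdiff.mp (Finset.mem_of_mem_erase hb)).1
          have hbT : b ∈ T := Finset.mem_filter.mpr ⟨hbS, hab, Finset.ne_of_mem_erase hb⟩
          exact (Finset.mem_sdiff.mp (Finset.mem_of_mem_erase hb)).2 hbT
        · intro hab
          have haS : a ∈ S := (Finset.mem_sdiff.mp (Finset.mem_of_mem_erase ha)).1
          have haT : a ∈ T := Finset.mem_filter.mpr ⟨haS, hab.symm, Finset.ne_of_mem_erase ha⟩
          exact (Finset.mem_sdiff.mp (Finset.mem_of_mem_erase ha)).2 haT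
        · exact hSI a (Finset.mem_sdiff.mp (Finset.mem_of_mem_erase ha)).1 b
            (Finset.mem_sdiff.mp (Finset.mem_of_mem_erase hb)).1
      have hS'sub : ↑S' ⊆ ({v}ᶜ : Set V) := by
        intro u hu
        simp only [hS', Finset.coe_insert, Set.mem_insert_iff] at hu
        rcases hu with rfl | hu
        · simpa using hvne.symm
        · simp only [Set.mem_compl_iff, Set.mem_singleton_iff]
          exact Finset.ne_of_mem_erase (by exact_mod_cast hu)
      have hvST : v ∈ S \ T := Finset.mem_sdiff.mpr ⟨hvS, hvT⟩
      have hsum : ∑ u ∈ S', w u = w x + (∑ u ∈ S, w u - ∑ u ∈ T, w u - w v) := by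
        rw [hS', Finset.sum_insert hxnot,
          Finset.sum_erase_eq_sub hvST,
          Finset.sum_sdiff_eq_sub (Finset.filter_subset _ _)]
      have : ∑ u ∈ S, w u ≤ ∑ u ∈ S', w u := by
        rw [hsum]; linarith
      calc ∑ u ∈ S, w u ≤ ∑ u ∈ S', w u := this
        _ ≤ alphaOn G w ({v}ᶜ : Set V) := alphaOn_mem_le G w _ S' hS'sub hS'I
    · refine alphaOn_mem_le G w _ S ?_ hSI
      intro u hu
      simp only [Set.mem_compl_iff, Set.mem_singleton_iff]
      rintro rfl
      exact hvS (by exact_mod_cast hu)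
end
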